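/- arXiv:0902.0342 — 2 statements merged into one kernel-verified Lean document; each statement's English description precedes it below -/
import Mathlib

section
/- Let Z = (Z_1,...,Z_T) be uniformly distributed on the T standard basis vectors (a multinomial with one trial and equal cell probabilities), independent of X = (X_1,...,X_T) where X_i has continuous strictly increasing CDF G_i. Define U = Π_{i=1}^T F_i(X_i)^{Z_i}. If (1/T)·Σ_{i=1}^T G_i(F_i^{-1}(p)) = p for all p ∈ (0,1), then U is uniformly distributed on (0,1). -/
open MeasureTheory ProbabilityTheory Set
open scoped ENNReal

/-!
Conditioning on `J`, which is independent of `X`, the law of `U = F_J(X_J)` is the mixture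
`(1/T) ∑ᵢ law(F_i(X_i))`. For `p ∈ (0,1)`, strict monotonicity of `F_i` gives
`P(F_i(X_i) ≤ p) = G_i(F_i⁻¹(p))`, so calibration says exactly that the CDF of `U` is the identity
on `(0,1)`. A CDF, being monotone with values in `[0,1]`, is then forced to be `0` below `0` and
`1` above `1`.
-/

lemma eq_max_min_of_monotone_of_eqOn_Ioo {F : ℝ → ℝ} (hF : Monotone F) (h0 : ∀ t, 0 ≤ F t)
    (h1 : ∀ t, F t ≤ 1) (h : EqOn F id (Ioo 0 1)) (t : ℝ) : F t = max 0 (min t 1) := by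
  rcases le_or_gt t 0 with ht0 | ht0
  · rw [min_eq_left (ht0.trans zero_le_one), max_eq_left ht0]
    refine eq_of_le_of_forall_lt_imp_le_of_dense (h0 t) fun a ha ↦ ?_
    have hp : min a 2⁻¹ ∈ Ioo (0 : ℝ) 1 := ⟨lt_min ha (by norm_num), by norm_num⟩
    calc F t ≤ F (min a 2⁻¹) := hF (ht0.trans hp.1.le)
      _ = min a 2⁻¹ := h hp
      _ ≤ a := min_le_left _ _
  rcases lt_or_ge t 1 with ht1 | ht1
  · simp [h ⟨ht0, ht1⟩, ht0.le, ht1.le]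
  · rw [min_eq_right ht1, max_eq_right zero_le_one]
    refine le_antisymm (h1 t) (le_of_forall_lt_imp_le_of_dense fun c hc ↦ ?_)
    have hp : max c 2⁻¹ ∈ Ioo (0 : ℝ) 1 := ⟨lt_max_of_lt_right (by norm_num), max_lt hc (by norm_num)⟩
    calc c ≤ max c 2⁻¹ := le_max_left _ _
      _ = F (max c 2⁻¹) := (h hp).symm
      _ ≤ F t := hF (hp.2.le.trans ht1)

lemma eq_uniform_of_measureReal_Iic {μ : Measure ℝ} [IsProbabilityMeasure μ]
    (h : ∀ p ∈ Ioo (0 : ℝ) 1, μ.real (Iic p) = p) : μ = volume.restrict (Ioo 0 1) := by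
  have : IsProbabilityMeasure (volume.restrict (Ioo (0 : ℝ) 1)) := ⟨by simp⟩
  have hcdf : ∀ (ν : Measure ℝ) [IsProbabilityMeasure ν],
      (∀ p ∈ Ioo (0 : ℝ) 1, ν.real (Iic p) = p) → ∀ t, cdf ν t = max 0 (min t 1) :=
    fun ν _ hν ↦ eq_max_min_of_monotone_of_eqOn_Ioo (monotone_cdf ν) (cdf_nonneg ν)
      (cdf_le_one ν) fun p hp ↦ (cdf_eq_real ν p).trans (hν p hp)
  refine Measure.eq_of_cdf _ _ (StieltjesFunction.ext fun t ↦ ?_)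
  rw [hcdf μ h, hcdf _ (fun p hp ↦ ?_)]
  have hIoc : Iic p ∩ Ioo 0 1 = Ioc 0 p := by
    ext x
    simp only [mem_inter_iff, mem_Iic, mem_Ioo, mem_Ioc]
    exact ⟨fun ⟨hxp, hx0, _⟩ ↦ ⟨hx0, hxp⟩, fun ⟨hx0, hxp⟩ ↦ ⟨hxp, hx0, hxp.trans_lt hp.2⟩⟩
  simp [measureReal_restrict_apply measurableSet_Iic, hIoc, hp.1.le]

section Mixture

variable {Ω ι β γ : Type*} [MeasurableSpace Ω] [Fintype ι] [MeasurableSpace ι]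
  [MeasurableSingletonClass ι] [MeasurableSpace β] [MeasurableSpace γ]
  {J : Ω → ι} {Y : Ω → β} {g : ι → β → γ}

lemma measurable_apply_index (hg : ∀ i, Measurable (g i)) (hJ : Measurable J)
    (hY : Measurable Y) : Measurable fun ω ↦ g (J ω) (Y ω) :=
  (measurable_from_prod_countable_right (f := fun p : ι × β ↦ g p.1 p.2) hg).comp (hJ.prodMk hY)

lemma map_apply_index_eq_sum {P : Measure Ω} (hg : ∀ i, Measurable (g i)) (hJ : Measurable J)
    (hY : Measurable Y) (hind : IndepFun J Y P) :
    P.map (fun ω ↦ g (J ω) (Y ω)) = ∑ i, P (J ⁻¹' {i}) • P.map (g i ∘ Y) := by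
  ext s hs
  have hpre : (fun ω ↦ g (J ω) (Y ω)) ⁻¹' s = ⋃ i, J ⁻¹' {i} ∩ Y ⁻¹' (g i ⁻¹' s) := by
    ext ω; simp
  have hdisj : Pairwise (Function.onFun Disjoint fun i ↦ J ⁻¹' {i} ∩ Y ⁻¹' (g i ⁻¹' s)) :=
    (pairwise_disjoint_fiber J).mono fun _ _ h ↦ h.mono inter_subset_left inter_subset_left
  rw [Measure.map_apply (measurable_apply_index hg hJ hY) hs, hpre,
    measure_iUnion hdisj fun i ↦ (hJ (measurableSet_singleton i)).inter (hY (hg i hs)),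
    tsum_fintype, Measure.finsetSum_apply]
  refine Finset.sum_congr rfl fun i _ ↦ ?_
  rw [hind.measure_inter_preimage_eq_mul _ _ (measurableSet_singleton i) (hg i hs),
    Measure.smul_apply, Measure.map_apply ((hg i).comp hY) hs, smul_eq_mul, preimage_comp]

end Mixture

theorem pit_uniform_of_calibrated_general
    (T : ℕ)
    (F G Finv : Fin T → ℝ → ℝ)
    (hFm : ∀ i, StrictMono (F i))
    (hFinv : ∀ i, ∀ p ∈ Ioo (0:ℝ) 1, F i (Finv i p) = p)
    (hcal : ∀ p ∈ Ioo (0:ℝ) 1, (1 / T : ℝ) * ∑ i, G i (Finv i p) = p)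
    {Ω : Type*} [MeasurableSpace Ω] (P : Measure Ω) [IsProbabilityMeasure P]
    (X : Fin T → Ω → ℝ) (hXmeas : ∀ i, Measurable (X i))
    (hX : ∀ i x, (P {ω | X i ω ≤ x}).toReal = G i x)
    (J : Ω → Fin T) (hJmeas : Measurable J)
    (hJ : ∀ i, P {ω | J ω = i} = (T : ℝ≥0∞)⁻¹)
    (hindep : IndepFun J (fun ω i => X i ω) P) :
    P.map (fun ω => F (J ω) (X (J ω) ω)) = volume.restrict (Ioo (0:ℝ) 1) := by
  have hY : Measurable fun ω i ↦ X i ω := measurable_pi_lambda _ hXmeas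
  have hg : ∀ i, Measurable fun y : Fin T → ℝ ↦ F i (y i) := fun i ↦
    (hFm i).monotone.measurable.comp (measurable_pi_apply i)
  have := Measure.isProbabilityMeasure_map (μ := P)
    (measurable_apply_index hg hJmeas hY).aemeasurable
  refine eq_uniform_of_measureReal_Iic fun p hp ↦ ?_
  have hlaw : ∀ i, P.map ((fun y : Fin T → ℝ ↦ F i (y i)) ∘ fun ω i ↦ X i ω) (Iic p)
      = P {ω | X i ω ≤ Finv i p} := fun i ↦ by
    rw [Measure.map_apply ((hg i).comp hY) measurableSet_Iic]
    congr 1 with ω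
    have hmono := (hFm i).le_iff_le (a := X i ω) (b := Finv i p)
    rwa [hFinv i p hp] at hmono
  have hmix : P.map (fun ω => F (J ω) (X (J ω) ω)) (Iic p)
      = ∑ i, P {ω | J ω = i} * P {ω | X i ω ≤ Finv i p} := by
    rw [map_apply_index_eq_sum hg hJmeas hY hindep, Measure.finsetSum_apply]
    simp only [Measure.smul_apply, smul_eq_mul, hlaw]
    rfl
  calc (P.map _).real (Iic p) = ∑ i, (T : ℝ)⁻¹ * G i (Finv i p) := by
        rw [measureReal_def, hmix, ENNReal.toReal_sum fun i _ ↦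
          ENNReal.mul_ne_top (measure_ne_top _ _) (measure_ne_top _ _)]
        simp only [ENNReal.toReal_mul, hJ, hX, ENNReal.toReal_inv, ENNReal.toReal_natCast]
    _ = p := by rw [← Finset.mul_sum, ← one_div, hcal p hp]

/-- If `J` is uniform on the `T` indices, independent of `X = (X₁,…,X_T)` with `X i ∼ G i`,
and the finite probabilistic calibration condition holds, then `U = F_J(X_J)` is uniformly
distributed on `(0,1)`. -/
theorem pit_uniform_of_calibrated
    (T : ℕ) (hT : 0 < T)
    (F G Finv : Fin T → ℝ → ℝ)
    (hFc : ∀ i, Continuous (F i)) (hFm : ∀ i, StrictMono (F i))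
    (hGc : ∀ i, Continuous (G i)) (hGm : ∀ i, StrictMono (G i))
    (hFinv : ∀ i, ∀ p ∈ Ioo (0:ℝ) 1, F i (Finv i p) = p)
    (hcal : ∀ p ∈ Ioo (0:ℝ) 1, (1 / T : ℝ) * ∑ i, G i (Finv i p) = p)
    {Ω : Type*} [MeasurableSpace Ω] (P : Measure Ω) [IsProbabilityMeasure P]
    (X : Fin T → Ω → ℝ) (hXmeas : ∀ i, Measurable (X i))
    (hX : ∀ i x, (P {ω | X i ω ≤ x}).toReal = G i x)
    (J : Ω → Fin T) (hJmeas : Measurable J)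
    (hJ : ∀ i, P {ω | J ω = i} = (T : ℝ≥0∞)⁻¹)
    (hindep : IndepFun J (fun ω i => X i ω) P) :
    P.map (fun ω => F (J ω) (X (J ω) ω)) = volume.restrict (Ioo (0:ℝ) 1) :=
  pit_uniform_of_calibrated_general T F G Finv hFm hFinv hcal P X hXmeas hX J hJmeas hJ hindep
end

section
/- Let F be a single continuous strictly increasing CDF (the climatological forecaster) and G_1,...,G_T continuous strictly increasing CDFs with finite second moments satisfying (1/T)·Σ_{i=1}^T G_i(F^{-1}(p)) = p for all p ∈ (0,1). Then Var(F) ≥ (1/T)·Σ_{i=1}^T Var(G_i), with equality if and only if all the G_i have the same mean. -/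
/-!
Since `F` is strictly increasing with values in `(0, 1)`, calibration at `p = F x` gives
`F x = (1/T) ∑ G_i x` for every `x`, so `μ` is the uniform mixture of the `ν i`. For a mixture,
the variance about the overall mean splits as the average of the component variances plus the
average squared deviation of the component means from the overall mean (law of total
variance); the second term is nonnegative and vanishes exactly when all means coincide.
-/

open MeasureTheory ProbabilityTheory Set
open scoped ENNReal NNReal

lemma integral_sub_const_sq_eq_variance_add {Ω : Type*} [MeasurableSpace Ω] {μ : Measure Ω}
    [IsProbabilityMeasure μ] {X : Ω → ℝ} (hX : MemLp X 2 μ) (c : ℝ) :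
    ∫ ω, (X ω - c) ^ 2 ∂μ = Var[X; μ] + (μ[X] - c) ^ 2 := by
  have hXc : MemLp (fun ω ↦ X ω - c) 2 μ := hX.sub (memLp_const c)
  rw [← variance_sub_const hX.aestronglyMeasurable c, variance_eq_sub hXc,
    integral_sub (hX.integrable one_le_two) (integrable_const c)]
  simp

lemma variance_finsetSum_smul_measure {Ω ι : Type*} [MeasurableSpace Ω] [Fintype ι]
    {ν : ι → Measure Ω} [∀ i, IsProbabilityMeasure (ν i)] (w : ι → ℝ≥0) {X : Ω → ℝ}
    (hX : ∀ i, MemLp X 2 (ν i)) :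
    Var[X; ∑ i, w i • ν i] =
      ∑ i, (w i : ℝ) * (Var[X; ν i] + ((ν i)[X] - ∑ j, (w j : ℝ) * (ν j)[X]) ^ 2) := by
  have hmix {f : Ω → ℝ} (hf : ∀ i, Integrable f (ν i)) :
      ∫ ω, f ω ∂(∑ i, w i • ν i) = ∑ i, (w i : ℝ) * ∫ ω, f ω ∂(ν i) := by
    rw [integral_finsetSum_measure (μ := fun i ↦ w i • ν i) fun i _ ↦
      (hf i).smul_measure ENNReal.coe_ne_top]
    simp only [integral_smul_nnreal_measure, NNReal.smul_def, smul_eq_mul]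
  have hmean : (∑ i, w i • ν i)[X] = ∑ j, (w j : ℝ) * (ν j)[X] :=
    hmix fun i ↦ (hX i).integrable one_le_two
  have hXint : Integrable X (∑ i, w i • ν i) :=
    integrable_finsetSum_measure.2 fun i _ ↦
      ((hX i).integrable one_le_two).smul_measure ENNReal.coe_ne_top
  rw [variance_eq_integral hXint.aemeasurable, hmean,
    hmix (f := fun ω ↦ (X ω - _) ^ 2) fun i ↦ ((hX i).sub (memLp_const _)).integrable_sq]
  simp only [integral_sub_const_sq_eq_variance_add (hX _)]

lemma sum_mul_sq_sub_weighted_mean_eq_zero_iff {ι : Type*} [Fintype ι] {w m : ι → ℝ}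
    (hw : ∀ i, 0 < w i) (hw1 : ∑ i, w i = 1) :
    ∑ i, w i * (m i - ∑ j, w j * m j) ^ 2 = 0 ↔ ∀ i j, m i = m j := by
  constructor
  · intro h i j
    have hmean : ∀ i, m i = ∑ j, w j * m j := fun i ↦ by
      have hterm := (Finset.sum_eq_zero_iff_of_nonneg fun i _ ↦
        mul_nonneg (hw i).le (sq_nonneg _)).1 h i (Finset.mem_univ i)
      simpa [(hw i).ne', sub_eq_zero] using hterm
    rw [hmean i, hmean j]
  · intro h
    refine Finset.sum_eq_zero fun i _ ↦ ?_
    have hmean : ∑ j, w j * m j = m i := by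
      simp_rw [h _ i, ← Finset.sum_mul, hw1, one_mul]
    simp [hmean]

lemma StrictMono.mem_Ioo_of_forall_mem_Icc {α β : Type*} [Preorder α] [NoMinOrder α]
    [NoMaxOrder α] [Preorder β] {f : α → β} (hf : StrictMono f) {a b : β}
    (h : ∀ x, f x ∈ Icc a b) (x : α) : f x ∈ Ioo a b := by
  obtain ⟨y, hy⟩ := exists_lt x
  obtain ⟨z, hz⟩ := exists_gt x
  exact ⟨(h y).1.trans_lt (hf hy), (hf hz).trans_le (h z).2⟩

theorem climatological_variance_ge_of_calibrated_general
    (T : ℕ) (hT : 0 < T)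
    (F Finv : ℝ → ℝ) (G : Fin T → ℝ → ℝ)
    (μ : Measure ℝ) (ν : Fin T → Measure ℝ)
    [IsProbabilityMeasure μ] [∀ i, IsProbabilityMeasure (ν i)]
    (hFm : StrictMono F)
    (hμF : ∀ x, (μ (Iic x)).toReal = F x)
    (hνG : ∀ i x, (ν i (Iic x)).toReal = G i x)
    (hFinv : ∀ p ∈ Ioo (0:ℝ) 1, F (Finv p) = p)
    (hν2 : ∀ i, MemLp id 2 (ν i))
    (hcal : ∀ p ∈ Ioo (0:ℝ) 1, (1 / T : ℝ) * ∑ i, G i (Finv p) = p) :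
    variance id μ ≥ (1 / T : ℝ) * ∑ i, variance id (ν i)
    ∧ (variance id μ = (1 / T : ℝ) * ∑ i, variance id (ν i)
        ↔ ∀ i j, (∫ x, x ∂(ν i)) = ∫ x, x ∂(ν j)) := by
  have hF01 : ∀ x, F x ∈ Ioo (0 : ℝ) 1 := hFm.mem_Ioo_of_forall_mem_Icc fun x ↦
    hμF x ▸ ⟨ENNReal.toReal_nonneg,
      ENNReal.toReal_le_of_le_ofReal zero_le_one (by simpa using prob_le_one)⟩
  have hFavg : ∀ x, F x = (1 / T : ℝ) * ∑ i, G i x := fun x ↦ by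
    simpa only [hFm.injective (hFinv _ (hF01 x))] using (hcal _ (hF01 x)).symm
  have hμ : μ = ∑ i, (T : ℝ≥0)⁻¹ • ν i := by
    refine Measure.ext_of_Iic _ _ fun x ↦ ?_
    rw [← ENNReal.toReal_eq_toReal_iff' (measure_ne_top _ _) (measure_ne_top _ _), hμF, hFavg,
      Measure.finsetSum_apply, ENNReal.toReal_sum fun i _ ↦ measure_ne_top _ _]
    simp [hνG, Finset.mul_sum]
  have hvar : variance id μ = (1 / T : ℝ) * ∑ i, variance id (ν i) +
      ∑ i, (1 / T : ℝ) * ((∫ x, x ∂(ν i)) - ∑ j, (1 / T : ℝ) * ∫ x, x ∂(ν j)) ^ 2 := by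
    rw [hμ, variance_finsetSum_smul_measure _ hν2]
    simp [mul_add, Finset.sum_add_distrib, Finset.mul_sum]
  have hdisp := sum_mul_sq_sub_weighted_mean_eq_zero_iff
    (w := fun _ : Fin T ↦ (1 / T : ℝ)) (m := fun i ↦ ∫ x, x ∂(ν i))
    (fun _ ↦ by positivity) (by simp [hT.ne'])
  rw [hvar, ← hdisp]
  refine ⟨le_add_of_nonneg_right ?_, add_eq_left⟩
  exact Finset.sum_nonneg fun i _ ↦ by positivity

/-- Climatological forecaster: a single calibrated forecast distribution `F` (with law `μ`)
has variance at least the average variance of the true distributions `G i` (laws `ν i`),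
with equality iff all the `G i` have the same mean. -/
theorem climatological_variance_ge_of_calibrated
    (T : ℕ) (hT : 0 < T)
    (F Finv : ℝ → ℝ) (G : Fin T → ℝ → ℝ)
    (μ : Measure ℝ) (ν : Fin T → Measure ℝ)
    [IsProbabilityMeasure μ] [∀ i, IsProbabilityMeasure (ν i)]
    (hFc : Continuous F) (hFm : StrictMono F)
    (hGc : ∀ i, Continuous (G i)) (hGm : ∀ i, StrictMono (G i))
    (hμF : ∀ x, (μ (Iic x)).toReal = F x)
    (hνG : ∀ i x, (ν i (Iic x)).toReal = G i x)
    (hFinv : ∀ p ∈ Ioo (0:ℝ) 1, F (Finv p) = p)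
    (hμ2 : MemLp id 2 μ) (hν2 : ∀ i, MemLp id 2 (ν i))
    (hcal : ∀ p ∈ Ioo (0:ℝ) 1, (1 / T : ℝ) * ∑ i, G i (Finv p) = p) :
    variance id μ ≥ (1 / T : ℝ) * ∑ i, variance id (ν i)
    ∧ (variance id μ = (1 / T : ℝ) * ∑ i, variance id (ν i)
        ↔ ∀ i j, (∫ x, x ∂(ν i)) = ∫ x, x ∂(ν j)) :=
  climatological_variance_ge_of_calibrated_general T hT F Finv G μ ν hFm hμF hνG hFinv hν2 hcal
end
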